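/- arXiv:2412.11798 — 6 statements merged into one kernel-verified Lean document; each statement's English description precedes it below -/
import Mathlib

section
/- For every v ∈ V' and every φ ∈ W, the weak consistency error δ(v, φ) := (v, R φ) − (C v, φ) satisfies |δ(v, φ)| ≤ inf over v_c ∈ V_c and Φ ∈ W_h of (‖T(v − v_c)‖² + ‖S C(v − v_c)‖²)^{1/2} · (‖S⁻¹(φ − Φ)‖² + ‖T⁻¹ R(φ − Φ)‖²)^{1/2}. -/
open scoped RealInnerProductSpace

/-!
The consistency error `δ(v, φ) = ⟪v, R φ⟫ - ⟪C v, φ⟫` is bilinear, and the two integration-by-parts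
identities say that it vanishes on `V' × W_h` and on `V_c × W`. Hence `δ(v, φ) = δ(v - v_c, φ - Φ)`.
Inserting `T T⁻¹` into the first inner product and `S S⁻¹` into the second, each becomes a
Cauchy–Schwarz bound, and the two products are combined by Cauchy–Schwarz in `ℝ²`.
-/

theorem LinearMap.apply_sub_sub_of_eq_zero {R M N P : Type*} [CommRing R] [AddCommGroup M]
    [AddCommGroup N] [AddCommGroup P] [Module R M] [Module R N] [Module R P]
    (B : M →ₗ[R] N →ₗ[R] P) {m m' : M} {n n' : N}
    (h₁ : B m n' = 0) (h₂ : B m' n = 0) (h₃ : B m' n' = 0) :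
    B (m - m') (n - n') = B m n := by
  simp [h₁, h₂, h₃]

theorem Real.mul_add_mul_le_sqrt_mul_sqrt (a b c d : ℝ) :
    a * c + b * d ≤ √(a ^ 2 + b ^ 2) * √(c ^ 2 + d ^ 2) := by
  simpa [Fin.sum_univ_two] using Real.sum_mul_le_sqrt_mul_sqrt Finset.univ ![a, b] ![c, d]

section ConsistencyError

variable {H : Type*} [NormedAddCommGroup H] [InnerProductSpace ℝ H]

theorem abs_inner_le_norm_apply_mul_norm_symm_apply (T : H ≃ₗ[ℝ] H)
    (hT : (T : H →ₗ[ℝ] H).IsSymmetric) (u w : H) :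
    |⟪u, w⟫| ≤ ‖T u‖ * ‖T.symm w‖ := by
  have hmove : ⟪u, w⟫ = ⟪T u, T.symm w⟫ := by
    simpa using (hT u (T.symm w)).symm
  exact hmove ▸ abs_real_inner_le_norm _ _

noncomputable def consistencyError (C R : H →ₗ[ℝ] H) : H →ₗ[ℝ] H →ₗ[ℝ] ℝ :=
  (innerₗ H).compl₂ R - innerₗ H ∘ₗ C

@[simp]
theorem consistencyError_apply (C R : H →ₗ[ℝ] H) (v φ : H) :
    consistencyError C R v φ = ⟪v, R φ⟫ - ⟪C v, φ⟫ :=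
  rfl

theorem abs_consistencyError_le (C R : H →ₗ[ℝ] H) (T S : H ≃ₗ[ℝ] H)
    (hT : (T : H →ₗ[ℝ] H).IsSymmetric) (hS : (S : H →ₗ[ℝ] H).IsSymmetric) (e η : H) :
    |consistencyError C R e η| ≤
      √(‖T e‖ ^ 2 + ‖S (C e)‖ ^ 2) * √(‖S.symm η‖ ^ 2 + ‖T.symm (R η)‖ ^ 2) :=
  calc |consistencyError C R e η|
      ≤ |⟪e, R η⟫| + |⟪C e, η⟫| := abs_sub _ _
    _ ≤ ‖T e‖ * ‖T.symm (R η)‖ + ‖S (C e)‖ * ‖S.symm η‖ :=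
        add_le_add (abs_inner_le_norm_apply_mul_norm_symm_apply T hT _ _)
          (abs_inner_le_norm_apply_mul_norm_symm_apply S hS _ _)
    _ ≤ √(‖T e‖ ^ 2 + ‖S (C e)‖ ^ 2) * √(‖T.symm (R η)‖ ^ 2 + ‖S.symm η‖ ^ 2) :=
        Real.mul_add_mul_le_sqrt_mul_sqrt _ _ _ _
    _ = _ := by rw [add_comm (‖T.symm (R η)‖ ^ 2)]

end ConsistencyError

theorem weak_consistency_discrete_curl_general
    {H : Type*} [NormedAddCommGroup H] [InnerProductSpace ℝ H]
    (V' Vc W Wh : Submodule ℝ H) (hVc : Vc ≤ V')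
    (C R : H →ₗ[ℝ] H)
    (hibp₁ : ∀ v ∈ V', ∀ Φ ∈ Wh, ⟪v, R Φ⟫ = ⟪C v, Φ⟫)
    (hibp₂ : ∀ v ∈ Vc, ∀ ζ ∈ W, ⟪v, R ζ⟫ = ⟪C v, ζ⟫)
    (T S : H ≃ₗ[ℝ] H)
    (hT : ∀ u w : H, ⟪T u, w⟫ = ⟪u, T w⟫)
    (hS : ∀ u w : H, ⟪S u, w⟫ = ⟪u, S w⟫) :
    ∀ v ∈ V', ∀ φ ∈ W, ∀ vc ∈ Vc, ∀ Φ ∈ Wh,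
      |⟪v, R φ⟫ - ⟪C v, φ⟫| ≤
        Real.sqrt (‖T (v - vc)‖ ^ 2 + ‖S (C (v - vc))‖ ^ 2) *
          Real.sqrt (‖S.symm (φ - Φ)‖ ^ 2 + ‖T.symm (R (φ - Φ))‖ ^ 2) := by
  intro v hv φ hφ vc hvc Φ hΦ
  have hvanish : ∀ u ∈ V', ∀ ψ ∈ Wh, consistencyError C R u ψ = 0 := fun u hu ψ hψ => by
    simp [hibp₁ u hu ψ hψ]
  have hshift : consistencyError C R (v - vc) (φ - Φ) = consistencyError C R v φ :=
    (consistencyError C R).apply_sub_sub_of_eq_zero (hvanish v hv Φ hΦ)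
      (by simp [hibp₂ vc hvc φ hφ]) (hvanish vc (hVc hvc) Φ hΦ)
  rw [← consistencyError_apply, ← hshift]
  exact abs_consistencyError_le C R T S hT hS _ _

/-- **Weak consistency of the discrete curl (abstract form).**
For all `v ∈ V'` and `φ ∈ W`, the weak consistency error `δ(v, φ) := (v, R φ) − (C v, φ)`
is bounded by the infimum over `v_c ∈ V_c`, `Φ ∈ W_h` of
`(‖T(v − v_c)‖² + ‖S C(v − v_c)‖²)^{1/2} · (‖S⁻¹(φ − Φ)‖² + ‖T⁻¹ R(φ − Φ)‖²)^{1/2}`,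
i.e. it is bounded by each such product. -/
theorem weak_consistency_discrete_curl
    {H : Type*} [NormedAddCommGroup H] [InnerProductSpace ℝ H]
    (V' Vc W Wh : Submodule ℝ H) (hVc : Vc ≤ V') (hWh : Wh ≤ W)
    (C R : H →ₗ[ℝ] H)
    (hibp₁ : ∀ v ∈ V', ∀ Φ ∈ Wh, ⟪v, R Φ⟫ = ⟪C v, Φ⟫)
    (hibp₂ : ∀ v ∈ Vc, ∀ ζ ∈ W, ⟪v, R ζ⟫ = ⟪C v, ζ⟫)
    (T S : H ≃ₗ[ℝ] H)
    (hT : ∀ u w : H, ⟪T u, w⟫ = ⟪u, T w⟫)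
    (hS : ∀ u w : H, ⟪S u, w⟫ = ⟪u, S w⟫) :
    ∀ v ∈ V', ∀ φ ∈ W, ∀ vc ∈ Vc, ∀ Φ ∈ Wh,
      |⟪v, R φ⟫ - ⟪C v, φ⟫| ≤
        Real.sqrt (‖T (v - vc)‖ ^ 2 + ‖S (C (v - vc))‖ ^ 2) *
          Real.sqrt (‖S.symm (φ - Φ)‖ ^ 2 + ‖T.symm (R (φ - Φ))‖ ^ 2) :=
  weak_consistency_discrete_curl_general V' Vc W Wh hVc C R hibp₁ hibp₂ T S hT hS
end

section
/- For every v ∈ V there exists w ∈ V with |||w||| ≤ (1 + 2 C_st) |||v||| and b(v, w) = |||v|||². Consequently, the inf-sup constant of b satisfies: inf over v ∈ V with |||v||| = 1 of sup over w ∈ V with |||w||| = 1 of |b(v,w)| is at least 1/(1 + 2 C_st). Moreover, if C_st is the smallest constant for which the stability hypothesis holds (i.e., C_st = sup over g ∈ L with (g,w)_L = 0 for all w ∈ K and ‖g‖_L = 1 of ω|||v_g|||) and 0 < C_st < ∞, then this inf-sup constant is at most 1/C_st. -/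
/-! Split `v = v₀ + (v - v₀)` with `v₀ = Π_K v`. The reflection `v - 2v₀` has the same energy norm
and `b(v, v - 2v₀) = |||v|||² - 2ω²‖v - v₀‖²`; the missing term is `b(v, z)` for the solution `z`
of `b(z, ·) = (2ω²(v - v₀), ·)_L`, which exists since `v - v₀ ⊥ K` and has
`|||z||| ≤ 2 C_st |||v|||` because `ω‖v - v₀‖ ≤ |||v|||`. So `w = v - 2v₀ + z` works, and
normalising it bounds the inf-sup constant `γ` from below. Conversely
`γ |||v_g||| ≤ sup_w |(g, w)_L| / |||w||| ≤ ‖g‖_L / ω`, so `1/γ` is a stability constant, and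
minimality of `C_st` gives `γ ≤ 1/C_st`. -/

open scoped RealInnerProductSpace

/-- The energy norm `|||v||| := (ω²‖v‖_L² + ‖C v‖_M²)^{1/2}`. -/
noncomputable def tnorm {L M : Type*} [NormedAddCommGroup L] [InnerProductSpace ℝ L]
    [NormedAddCommGroup M] [InnerProductSpace ℝ M]
    (ω : ℝ) (C : L →ₗ[ℝ] M) (v : L) : ℝ :=
  Real.sqrt (ω ^ 2 * ‖v‖ ^ 2 + ‖C v‖ ^ 2)

section EnergyNorm

variable {L M : Type*} [NormedAddCommGroup L] [InnerProductSpace ℝ L]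
  [NormedAddCommGroup M] [InnerProductSpace ℝ M] (ω : ℝ) (C : L →ₗ[ℝ] M)

/-- `tnorm` is the norm of `v ↦ (ω v, C v)` in the `ℓ²` product, and `b` is an inner product of two
such images (with `-ω` on the right); this gives the triangle and Cauchy–Schwarz inequalities. -/
noncomputable def energyEmbedding : L →ₗ[ℝ] WithLp 2 (L × M) :=
  (WithLp.linearEquiv 2 ℝ (L × M)).symm.toLinearMap ∘ₗ (ω • LinearMap.id).prod C

lemma energyEmbedding_apply (v : L) : energyEmbedding ω C v = WithLp.toLp 2 (ω • v, C v) := rfl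

lemma tnorm_eq_norm_energyEmbedding (v : L) : tnorm ω C v = ‖energyEmbedding ω C v‖ := by
  rw [energyEmbedding_apply, WithLp.prod_norm_eq_of_L2, WithLp.toLp_fst, WithLp.toLp_snd, tnorm,
    norm_smul, mul_pow, Real.norm_eq_abs, sq_abs]

lemma tnorm_neg (v : L) : tnorm (-ω) C v = tnorm ω C v := by
  simp only [tnorm, neg_sq]

lemma tnorm_nonneg (v : L) : 0 ≤ tnorm ω C v := Real.sqrt_nonneg _

lemma tnorm_sq (v : L) : tnorm ω C v ^ 2 = ω ^ 2 * ‖v‖ ^ 2 + ‖C v‖ ^ 2 :=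
  Real.sq_sqrt (by positivity)

lemma tnorm_add_le (v w : L) : tnorm ω C (v + w) ≤ tnorm ω C v + tnorm ω C w := by
  simp only [tnorm_eq_norm_energyEmbedding, map_add]
  exact norm_add_le _ _

lemma tnorm_smul (c : ℝ) (v : L) : tnorm ω C (c • v) = |c| * tnorm ω C v := by
  simp only [tnorm_eq_norm_energyEmbedding, map_smul, norm_smul, Real.norm_eq_abs]

lemma mul_norm_le_tnorm (v : L) : ω * ‖v‖ ≤ tnorm ω C v :=
  (le_abs_self _).trans <| Real.abs_le_sqrt <| by
    rw [mul_pow]; exact le_add_of_nonneg_right (sq_nonneg _)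

lemma tnorm_sub_two_smul {v v₀ : L} (hCv₀ : C v₀ = 0) (hvv₀ : ⟪v, v₀⟫ = ‖v₀‖ ^ 2) :
    tnorm ω C (v - (2 : ℝ) • v₀) = tnorm ω C v := by
  have hnorm : ‖v - (2 : ℝ) • v₀‖ ^ 2 = ‖v‖ ^ 2 := by
    rw [norm_sub_sq_real, real_inner_smul_right, norm_smul, hvv₀, Real.norm_two]; ring
  simp only [tnorm, hnorm, map_sub, map_smul, hCv₀, smul_zero, sub_zero]

def bform (v w : L) : ℝ := -ω ^ 2 * ⟪v, w⟫ + ⟪C v, C w⟫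

lemma bform_comm (v w : L) : bform ω C v w = bform ω C w v := by
  simp only [bform, real_inner_comm]

lemma bform_add_right (v w₁ w₂ : L) :
    bform ω C v (w₁ + w₂) = bform ω C v w₁ + bform ω C v w₂ := by
  simp only [bform, map_add, inner_add_right]; ring

lemma bform_smul_right (v w : L) (c : ℝ) : bform ω C v (c • w) = c * bform ω C v w := by
  simp only [bform, map_smul, real_inner_smul_right]; ring

lemma bform_eq_inner_energyEmbedding (v w : L) :
    bform ω C v w = ⟪energyEmbedding ω C v, energyEmbedding (-ω) C w⟫ := by
  rw [energyEmbedding_apply, energyEmbedding_apply, WithLp.prod_inner_apply, real_inner_smul_left,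
    real_inner_smul_right, bform]
  ring

lemma abs_bform_le (v w : L) : |bform ω C v w| ≤ tnorm ω C v * tnorm ω C w := by
  rw [bform_eq_inner_energyEmbedding, tnorm_eq_norm_energyEmbedding, ← tnorm_neg,
    tnorm_eq_norm_energyEmbedding]
  exact abs_real_inner_le_norm _ _

end EnergyNorm

section InfSup

variable {L M : Type*} [NormedAddCommGroup L] [InnerProductSpace ℝ L]
  [NormedAddCommGroup M] [InnerProductSpace ℝ M] (ω : ℝ) (C : L →ₗ[ℝ] M) (V : Submodule ℝ L)

noncomputable def bformDualNorm (v : L) : ℝ :=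
  sSup {t : ℝ | ∃ w ∈ V, tnorm ω C w = 1 ∧ t = |bform ω C v w|}

noncomputable def infSupConstant : ℝ :=
  sInf {r : ℝ | ∃ v ∈ V, tnorm ω C v = 1 ∧ r = bformDualNorm ω C V v}

/-- The stability hypothesis with constant `c`, for data `g` that are `L`-orthogonal to
`K = {w ∈ V | C w = 0}`. -/
def IsStabilityConstant (c : ℝ) : Prop :=
  ∀ g : L, (∀ w ∈ V, C w = 0 → ⟪g, w⟫ = 0) →
    ∃ vg ∈ V, (∀ w ∈ V, bform ω C vg w = ⟪g, w⟫) ∧ ω * tnorm ω C vg ≤ c * ‖g‖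

variable {ω C V}

lemma bformDualNorm_nonneg (v : L) : 0 ≤ bformDualNorm ω C V v :=
  Real.sSup_nonneg <| by rintro _ ⟨w, -, -, rfl⟩; exact abs_nonneg _

lemma abs_bform_div_le_bformDualNorm {v w : L} (hw : w ∈ V) (hw₀ : tnorm ω C w ≠ 0) :
    |bform ω C v w| / tnorm ω C w ≤ bformDualNorm ω C V v := by
  have hbdd : BddAbove {t : ℝ | ∃ w ∈ V, tnorm ω C w = 1 ∧ t = |bform ω C v w|} := by
    refine ⟨tnorm ω C v, ?_⟩
    rintro _ ⟨u, -, hu, rfl⟩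
    simpa [hu] using abs_bform_le ω C v u
  have hpos : 0 < (tnorm ω C w)⁻¹ := inv_pos.mpr <| (tnorm_nonneg ω C w).lt_of_ne' hw₀
  refine le_csSup hbdd ⟨(tnorm ω C w)⁻¹ • w, V.smul_mem _ hw, ?_, ?_⟩
  · rw [tnorm_smul, abs_of_pos hpos, inv_mul_cancel₀ hw₀]
  · rw [bform_smul_right, abs_mul, abs_of_pos hpos, div_eq_inv_mul]

lemma bformDualNorm_le {v : L} {c : ℝ} (hc : 0 ≤ c)
    (h : ∀ w ∈ V, |bform ω C v w| ≤ c * tnorm ω C w) : bformDualNorm ω C V v ≤ c :=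
  Real.sSup_le (by rintro _ ⟨w, hw, hw₁, rfl⟩; simpa [hw₁] using h w hw) hc

lemma one_div_le_bformDualNorm {v w : L} {κ : ℝ} (hv : tnorm ω C v = 1) (hw : w ∈ V)
    (hwκ : tnorm ω C w ≤ κ) (hvw : bform ω C v w = 1) : 1 / κ ≤ bformDualNorm ω C V v := by
  have hw₁ : 1 ≤ tnorm ω C w := by simpa [hv, hvw] using abs_bform_le ω C v w
  calc 1 / κ ≤ 1 / tnorm ω C w := one_div_le_one_div_of_le (by linarith) hwκ
    _ = |bform ω C v w| / tnorm ω C w := by rw [hvw, abs_one]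
    _ ≤ bformDualNorm ω C V v := abs_bform_div_le_bformDualNorm hw (by linarith)

lemma exists_tnorm_le_and_bform_eq_tnorm_sq (hω : 0 < ω) {c : ℝ} (hc : 0 ≤ c)
    (hstab : IsStabilityConstant ω C V c) {v v₀ : L} (hv : v ∈ V) (hv₀ : v₀ ∈ V)
    (hCv₀ : C v₀ = 0) (horth : ∀ w ∈ V, C w = 0 → ⟪v - v₀, w⟫ = 0) :
    ∃ w ∈ V, tnorm ω C w ≤ (1 + 2 * c) * tnorm ω C v ∧ bform ω C v w = tnorm ω C v ^ 2 := by
  have hvv₀ : ⟪v, v₀⟫ = ‖v₀‖ ^ 2 := by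
    have := horth v₀ hv₀ hCv₀
    rwa [inner_sub_left, real_inner_self_eq_norm_sq, sub_eq_zero] at this
  obtain ⟨z, hzV, hz, hz_le⟩ := hstab ((2 * ω ^ 2) • (v - v₀)) fun w hw hCw => by
    rw [real_inner_smul_left, horth w hw hCw, mul_zero]
  have hnorm_sub : ‖v - v₀‖ ≤ ‖v‖ := by
    refine (sq_le_sq₀ (norm_nonneg _) (norm_nonneg _)).mp ?_
    rw [norm_sub_sq_real, hvv₀]
    nlinarith [sq_nonneg ‖v₀‖]
  have hz_tnorm : tnorm ω C z ≤ 2 * c * tnorm ω C v := by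
    refine le_of_mul_le_mul_left ?_ hω
    calc ω * tnorm ω C z ≤ c * ‖(2 * ω ^ 2) • (v - v₀)‖ := hz_le
      _ = 2 * c * ω * (ω * ‖v - v₀‖) := by
        rw [norm_smul, Real.norm_of_nonneg (by positivity)]; ring
      _ ≤ 2 * c * ω * tnorm ω C v := by
        gcongr
        exact (mul_le_mul_of_nonneg_left hnorm_sub hω.le).trans (mul_norm_le_tnorm ω C v)
      _ = ω * (2 * c * tnorm ω C v) := by ring
  have hbz : bform ω C v z = 2 * ω ^ 2 * (‖v‖ ^ 2 - ‖v₀‖ ^ 2) := by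
    rw [bform_comm, hz v hv, real_inner_smul_left, inner_sub_left, real_inner_self_eq_norm_sq,
      real_inner_comm, hvv₀]
  have hbreflect :
      bform ω C v (v - (2 : ℝ) • v₀) = -ω ^ 2 * (‖v‖ ^ 2 - 2 * ‖v₀‖ ^ 2) + ‖C v‖ ^ 2 := by
    simp only [bform, map_sub, map_smul, hCv₀, smul_zero, sub_zero, inner_sub_right,
      real_inner_smul_right, hvv₀, real_inner_self_eq_norm_sq]
  refine ⟨v - (2 : ℝ) • v₀ + z, V.add_mem (V.sub_mem hv (V.smul_mem _ hv₀)) hzV, ?_, ?_⟩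
  · calc tnorm ω C (v - (2 : ℝ) • v₀ + z) ≤ tnorm ω C (v - (2 : ℝ) • v₀) + tnorm ω C z :=
          tnorm_add_le ω C _ _
      _ ≤ (1 + 2 * c) * tnorm ω C v := by rw [tnorm_sub_two_smul ω C hCv₀ hvv₀]; linarith
  · rw [bform_add_right, hbz, hbreflect, tnorm_sq]; ring

lemma mul_mul_tnorm_le_of_le_bformDualNorm (hω : 0 < ω) {γ : ℝ}
    (hγ : ∀ v ∈ V, tnorm ω C v = 1 → γ ≤ bformDualNorm ω C V v) {g vg : L} (hvg : vg ∈ V)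
    (hb : ∀ w ∈ V, bform ω C vg w = ⟪g, w⟫) : γ * (ω * tnorm ω C vg) ≤ ‖g‖ := by
  rcases (tnorm_nonneg ω C vg).eq_or_lt with h₀ | hpos
  · simp [← h₀]
  set t := tnorm ω C vg
  have hωt : 0 < ω * t := mul_pos hω hpos
  have hunit : tnorm ω C (t⁻¹ • vg) = 1 := by
    rw [tnorm_smul, abs_of_pos (inv_pos.mpr hpos), inv_mul_cancel₀ hpos.ne']
  have hdual : bformDualNorm ω C V (t⁻¹ • vg) ≤ ‖g‖ / (ω * t) := by
    refine bformDualNorm_le (by positivity) fun w hw => ?_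
    rw [bform_comm, bform_smul_right, bform_comm, hb w hw, abs_mul, abs_of_pos (inv_pos.mpr hpos),
      div_mul_eq_mul_div, le_div_iff₀ hωt]
    calc t⁻¹ * |⟪g, w⟫| * (ω * t) = |⟪g, w⟫| * ω := by field_simp
      _ ≤ ‖g‖ * ‖w‖ * ω := by gcongr; exact abs_real_inner_le_norm g w
      _ ≤ ‖g‖ * tnorm ω C w := by
        rw [mul_assoc, mul_comm ‖w‖]; gcongr; exact mul_norm_le_tnorm ω C w
  calc γ * (ω * t) ≤ ‖g‖ / (ω * t) * (ω * t) := by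
        gcongr; exact (hγ _ (V.smul_mem _ hvg) hunit).trans hdual
    _ = ‖g‖ := div_mul_cancel₀ _ hωt.ne'

lemma IsStabilityConstant.inv_of_le_bformDualNorm (hω : 0 < ω) {c γ : ℝ}
    (hstab : IsStabilityConstant ω C V c) (hγ₀ : 0 < γ)
    (hγ : ∀ v ∈ V, tnorm ω C v = 1 → γ ≤ bformDualNorm ω C V v) :
    IsStabilityConstant ω C V γ⁻¹ := by
  intro g hg
  obtain ⟨vg, hvg, hb, -⟩ := hstab g hg
  refine ⟨vg, hvg, hb, ?_⟩
  rw [inv_mul_eq_div, le_div_iff₀' hγ₀]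
  exact mul_mul_tnorm_le_of_le_bformDualNorm hω hγ hvg hb

lemma infSupConstant_le_one_div (hω : 0 < ω) {c : ℝ} (hc : 0 < c)
    (hstab : IsStabilityConstant ω C V c)
    (hmin : ∀ c', 0 ≤ c' → IsStabilityConstant ω C V c' → c ≤ c') :
    infSupConstant ω C V ≤ 1 / c := by
  rcases le_or_gt (infSupConstant ω C V) 0 with hle | hγ₀
  · exact hle.trans (by positivity)
  have hγ : ∀ v ∈ V, tnorm ω C v = 1 → infSupConstant ω C V ≤ bformDualNorm ω C V v :=
    fun v hv hv₁ => csInf_le ⟨0, by rintro _ ⟨u, -, -, rfl⟩; exact bformDualNorm_nonneg u⟩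
      ⟨v, hv, hv₁, rfl⟩
  rw [le_one_div hγ₀ hc, one_div]
  exact hmin _ (inv_nonneg.mpr hγ₀.le) (hstab.inv_of_le_bformDualNorm hω hγ₀ hγ)

end InfSup

/-- **Inf-sup stability of the continuous problem (abstract form).**
(a) For every `v ∈ V` there is `w ∈ V` with `|||w||| ≤ (1 + 2 C_st) |||v|||` and
`b(v, w) = |||v|||²`. (b) Consequently, for every unit vector `v ∈ V`,
`sup_{w ∈ V, |||w||| = 1} |b(v, w)| ≥ 1/(1 + 2 C_st)`, i.e. the inf-sup constant is at
least `1/(1 + 2 C_st)`. (c) If moreover `C_st` is the smallest constant for which the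
stability hypothesis holds and `0 < C_st`, then the inf-sup constant is at most
`1/C_st`. -/
theorem inf_sup_stability_continuous
    {L M : Type*} [NormedAddCommGroup L] [InnerProductSpace ℝ L]
    [NormedAddCommGroup M] [InnerProductSpace ℝ M]
    (ω : ℝ) (hω : 0 < ω)
    (V : Submodule ℝ L) (C : L →ₗ[ℝ] M)
    (projK : L →ₗ[ℝ] L)
    (hprojK_mem : ∀ v : L, projK v ∈ V ∧ C (projK v) = 0)
    (hprojK_orth : ∀ v : L, ∀ w ∈ V, C w = 0 → ⟪v - projK v, w⟫ = 0)
    (Cst : ℝ) (hCst : 0 ≤ Cst)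
    (hstab : ∀ g : L, (∀ w ∈ V, C w = 0 → ⟪g, w⟫ = 0) →
      ∃ vg ∈ V, (∀ w ∈ V, -ω ^ 2 * ⟪vg, w⟫ + ⟪C vg, C w⟫ = ⟪g, w⟫) ∧
        ω * tnorm ω C vg ≤ Cst * ‖g‖) :
    (∀ v ∈ V, ∃ w ∈ V, tnorm ω C w ≤ (1 + 2 * Cst) * tnorm ω C v ∧
      -ω ^ 2 * ⟪v, w⟫ + ⟪C v, C w⟫ = ω ^ 2 * ‖v‖ ^ 2 + ‖C v‖ ^ 2) ∧
    (∀ v ∈ V, tnorm ω C v = 1 →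
      1 / (1 + 2 * Cst) ≤
        sSup {t : ℝ | ∃ w ∈ V, tnorm ω C w = 1 ∧
          t = |(-ω ^ 2 * ⟪v, w⟫ + ⟪C v, C w⟫)|}) ∧
    ((∀ Cst' : ℝ, 0 ≤ Cst' →
        (∀ g : L, (∀ w ∈ V, C w = 0 → ⟪g, w⟫ = 0) →
          ∃ vg ∈ V, (∀ w ∈ V, -ω ^ 2 * ⟪vg, w⟫ + ⟪C vg, C w⟫ = ⟪g, w⟫) ∧
            ω * tnorm ω C vg ≤ Cst' * ‖g‖) →
        Cst ≤ Cst') →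
      0 < Cst →
      sInf {r : ℝ | ∃ v ∈ V, tnorm ω C v = 1 ∧
        r = sSup {t : ℝ | ∃ w ∈ V, tnorm ω C w = 1 ∧
          t = |(-ω ^ 2 * ⟪v, w⟫ + ⟪C v, C w⟫)|}} ≤ 1 / Cst) := by
  have existence (v : L) (hv : v ∈ V) : ∃ w ∈ V,
      tnorm ω C w ≤ (1 + 2 * Cst) * tnorm ω C v ∧ bform ω C v w = tnorm ω C v ^ 2 :=
    exists_tnorm_le_and_bform_eq_tnorm_sq hω hCst hstab hv (hprojK_mem v).1 (hprojK_mem v).2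
      (hprojK_orth v)
  refine ⟨fun v hv => ?_, fun v hv hv₁ => ?_,
    fun hmin hCst_pos => infSupConstant_le_one_div hω hCst_pos hstab hmin⟩
  · obtain ⟨w, hw, hle, hb⟩ := existence v hv
    exact ⟨w, hw, hle, hb.trans (tnorm_sq ω C v)⟩
  · obtain ⟨w, hw, hle, hb⟩ := existence v hv
    rw [hv₁, mul_one] at hle
    rw [hv₁, one_pow] at hb
    exact one_div_le_bformDualNorm hv₁ hw hle hb
end

section
/- Let E ∈ V and E_h ∈ V_h, set e := E − E_h and η := E − P E, and assume (e, w)_L = 0 for all w ∈ K_h. Then ω‖Π_K e‖_L ≤ ω‖Π_K η‖_L + γ_div (‖C(P e)‖_M² + |P e|_nc²)^{1/2}. -/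
open scoped RealInnerProductSpace

/-! The Galerkin projection `P` fixes `V_h`, so `e = η + P e`. Since `K_h ⊆ V_h ∩ V` lies in the
kernel of the curl and of the stabilization, Galerkin orthogonality reduces on `K_h` to
`L`-orthogonality; together with `(e, K_h) = 0` this gives `Π_{K_h} (P e) = 0`, and the
divergence-conformity hypothesis applies to `P e`. The triangle inequality for `Π_K` concludes. -/

section GalerkinProjection

variable {L M : Type*} [NormedAddCommGroup L] [InnerProductSpace ℝ L]
  [NormedAddCommGroup M] [InnerProductSpace ℝ M]
  {ω : ℝ} {C : L →ₗ[ℝ] M} {s : L →ₗ[ℝ] L →ₗ[ℝ] ℝ} {Vh : Submodule ℝ L} {P : L →ₗ[ℝ] L}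

theorem eq_zero_of_energy_self_eq_zero (hω : ω ≠ 0) (hs_pos : ∀ v : L, 0 ≤ s v v) {x : L}
    (hx : ω ^ 2 * ⟪x, x⟫ + ⟪C x, C x⟫ + s x x = 0) : x = 0 := by
  have hCx : 0 ≤ ⟪C x, C x⟫ := real_inner_self_nonneg
  have hωx : 0 ≤ ω ^ 2 * ⟪x, x⟫ := mul_nonneg (sq_nonneg ω) real_inner_self_nonneg
  have hxx : ω ^ 2 * ⟪x, x⟫ = 0 := by linarith [hs_pos x]
  exact inner_self_eq_zero.mp ((mul_eq_zero.mp hxx).resolve_left (pow_ne_zero 2 hω))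

theorem galerkin_apply_eq_self (hω : ω ≠ 0) (hs_pos : ∀ v : L, 0 ≤ s v v)
    (hP_mem : ∀ v : L, P v ∈ Vh)
    (hP_orth : ∀ v : L, ∀ wh ∈ Vh,
      ω ^ 2 * ⟪v - P v, wh⟫ + ⟪C (v - P v), C wh⟫ + s (v - P v) wh = 0)
    {v : L} (hv : v ∈ Vh) : P v = v :=
  (sub_eq_zero.mp <| eq_zero_of_energy_self_eq_zero hω hs_pos <|
    hP_orth v _ (Vh.sub_mem hv (hP_mem v))).symm

theorem inner_sub_galerkin_eq_zero (hω : ω ≠ 0)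
    (hP_orth : ∀ v : L, ∀ wh ∈ Vh,
      ω ^ 2 * ⟪v - P v, wh⟫ + ⟪C (v - P v), C wh⟫ + s (v - P v) wh = 0)
    (v : L) {w : L} (hw : w ∈ Vh) (hCw : C w = 0) (hsw : s (v - P v) w = 0) :
    ⟪v - P v, w⟫ = 0 := by
  have h := hP_orth v w hw
  rw [hCw, inner_zero_right, hsw, add_zero, add_zero] at h
  exact (mul_eq_zero.mp h).resolve_left (pow_ne_zero 2 hω)

end GalerkinProjection

theorem apply_eq_zero_of_forall_inner_eq_zero {L : Type*} [NormedAddCommGroup L]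
    [InnerProductSpace ℝ L] {p : L → L} {S : Set L} {x : L} (hp_mem : p x ∈ S)
    (hp_orth : ∀ w ∈ S, ⟪x - p x, w⟫ = 0) (hx : ∀ w ∈ S, ⟪x, w⟫ = 0) : p x = 0 := by
  have h := hp_orth (p x) hp_mem
  rw [inner_sub_left, hx (p x) hp_mem, zero_sub, neg_eq_zero] at h
  exact inner_self_eq_zero.mp h

theorem bound_on_theta_pi_general
    {L M : Type*} [NormedAddCommGroup L] [InnerProductSpace ℝ L]
    [NormedAddCommGroup M] [InnerProductSpace ℝ M]
    (ω : ℝ) (hω : 0 < ω)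
    (V Vh : Submodule ℝ L)
    (C : L →ₗ[ℝ] M)
    (s : L →ₗ[ℝ] L →ₗ[ℝ] ℝ)
    (hs_pos : ∀ v : L, 0 ≤ s v v)
    (hs_conf : ∀ v w : L, v ∈ V ∨ w ∈ V → s v w = 0)
    (nc : L → ℝ)
    (projK : L →ₗ[ℝ] L)
    (projKh : L →ₗ[ℝ] L)
    (hprojKh_mem : ∀ v : L, projKh v ∈ Vh ⊓ V ∧ C (projKh v) = 0)
    (hprojKh_orth : ∀ v : L, ∀ w ∈ Vh ⊓ V, C w = 0 → ⟪v - projKh v, w⟫ = 0)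
    (γdiv : ℝ)
    (hdiv : ∀ vh ∈ Vh, projKh vh = 0 →
      ω * ‖projK vh‖ ≤ γdiv * Real.sqrt (‖C vh‖ ^ 2 + nc vh ^ 2))
    (P : L →ₗ[ℝ] L)
    (hP_mem : ∀ v : L, P v ∈ Vh)
    (hP_orth : ∀ v : L, ∀ wh ∈ Vh,
      ω ^ 2 * ⟪v - P v, wh⟫ + ⟪C (v - P v), C wh⟫ + s (v - P v) wh = 0)
    (E : L) (Eh : L) (hEh : Eh ∈ Vh)
    (horth : ∀ w ∈ Vh ⊓ V, C w = 0 → ⟪E - Eh, w⟫ = 0) :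
    ω * ‖projK (E - Eh)‖ ≤
      ω * ‖projK (E - P E)‖ +
        γdiv * Real.sqrt (‖C (P (E - Eh))‖ ^ 2 + nc (P (E - Eh)) ^ 2) := by
  have hsplit : projK (E - Eh) = projK (E - P E) + projK (P (E - Eh)) := by
    rw [← map_add, map_sub P, galerkin_apply_eq_self hω.ne' hs_pos hP_mem hP_orth hEh]
    congr 1
    abel
  have hPe_orth : ∀ w ∈ {w | w ∈ Vh ⊓ V ∧ C w = 0}, ⟪P (E - Eh), w⟫ = 0 := by
    rintro w ⟨hw, hCw⟩
    have h := inner_sub_galerkin_eq_zero hω.ne' hP_orth (E - Eh) hw.1 hCw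
      (hs_conf _ _ (Or.inr hw.2))
    rw [inner_sub_left, horth w hw hCw, zero_sub, neg_eq_zero] at h
    exact h
  have hKh : projKh (P (E - Eh)) = 0 :=
    apply_eq_zero_of_forall_inner_eq_zero (hprojKh_mem _)
      (fun w hw => hprojKh_orth _ w hw.1 hw.2) hPe_orth
  calc ω * ‖projK (E - Eh)‖
      ≤ ω * ‖projK (E - P E)‖ + ω * ‖projK (P (E - Eh))‖ := by
        rw [← mul_add, hsplit]
        exact mul_le_mul_of_nonneg_left (norm_add_le _ _) hω.le
    _ ≤ _ := add_le_add le_rfl (hdiv _ (hP_mem _) hKh)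

/-- **Bound on the curl-free error component.**
If `(e, w)_L = 0` for all `w ∈ K_h`, then
`ω‖Π_K e‖_L ≤ ω‖Π_K η‖_L + γ_div (‖C(P e)‖_M² + |P e|_nc²)^{1/2}`,
where `e := E − E_h` and `η := E − P E`. -/
theorem bound_on_theta_pi
    {L M : Type*} [NormedAddCommGroup L] [InnerProductSpace ℝ L]
    [NormedAddCommGroup M] [InnerProductSpace ℝ M]
    (ω : ℝ) (hω : 0 < ω)
    (Vs V Vh : Submodule ℝ L) (hVVs : V ≤ Vs) (hVhVs : Vh ≤ Vs)
    (C : L →ₗ[ℝ] M)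
    (s : L →ₗ[ℝ] L →ₗ[ℝ] ℝ)
    (hs_symm : ∀ v w : L, s v w = s w v)
    (hs_pos : ∀ v : L, 0 ≤ s v v)
    (hs_conf : ∀ v w : L, v ∈ V ∨ w ∈ V → s v w = 0)
    (nc : L → ℝ)
    (hnc_nonneg : ∀ v : L, 0 ≤ nc v)
    (hnc_add : ∀ v w : L, nc (v + w) ≤ nc v + nc w)
    (hnc_smul : ∀ (c : ℝ) (v : L), nc (c • v) = |c| * nc v)
    (hnc_conf : ∀ v ∈ V, nc v = 0)
    (projK : L →ₗ[ℝ] L)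
    (hprojK_mem : ∀ v : L, projK v ∈ V ∧ C (projK v) = 0)
    (hprojK_orth : ∀ v : L, ∀ w ∈ V, C w = 0 → ⟪v - projK v, w⟫ = 0)
    (projKh : L →ₗ[ℝ] L)
    (hprojKh_mem : ∀ v : L, projKh v ∈ Vh ⊓ V ∧ C (projKh v) = 0)
    (hprojKh_orth : ∀ v : L, ∀ w ∈ Vh ⊓ V, C w = 0 → ⟪v - projKh v, w⟫ = 0)
    (γdiv : ℝ) (hγdiv : 0 ≤ γdiv)
    (hdiv : ∀ vh ∈ Vh, projKh vh = 0 →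
      ω * ‖projK vh‖ ≤ γdiv * Real.sqrt (‖C vh‖ ^ 2 + nc vh ^ 2))
    (P : L →ₗ[ℝ] L)
    (hP_mem : ∀ v : L, P v ∈ Vh)
    (hP_orth : ∀ v : L, ∀ wh ∈ Vh,
      ω ^ 2 * ⟪v - P v, wh⟫ + ⟪C (v - P v), C wh⟫ + s (v - P v) wh = 0)
    (E : L) (hE : E ∈ V) (Eh : L) (hEh : Eh ∈ Vh)
    (horth : ∀ w ∈ Vh ⊓ V, C w = 0 → ⟪E - Eh, w⟫ = 0) :
    ω * ‖projK (E - Eh)‖ ≤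
      ω * ‖projK (E - P E)‖ +
        γdiv * Real.sqrt (‖C (P (E - Eh))‖ ^ 2 + nc (P (E - Eh)) ^ 2) :=
  bound_on_theta_pi_general ω hω V Vh C s hs_pos hs_conf nc projK projKh hprojKh_mem hprojKh_orth
    γdiv hdiv P hP_mem hP_orth E Eh hEh horth
end

section
/- Let E ∈ V and E_h ∈ V_h; set e := E − E_h, η := E − P E and θ₀ := e − Π_K e. Assume Galerkin orthogonality b♯(e, v) = 0 for all v ∈ V_h^c and the weak-consistency bound |b♯(e, w_h)| ≤ D |w_h|_nc for all w_h ∈ V_h, where D ≥ 0. Then |||θ₀|||♯² ≤ |||η − Π_K η|||♯² + 2 ω‖Π_K e‖_L · γ_div (‖C(P e)‖_M² + |P e|_nc²)^{1/2} + 2 |P e|_nc · D + 4 ω² ‖θ₀‖_L². -/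
open scoped RealInnerProductSpace

/-!
Since `P E_h = E_h`, the error splits as `e = η + P e`, hence
`θ₀ = (η − Π_K η) + (P e − Π_K P e)`. Write `|||θ₀|||♯² = b♯(θ₀, θ₀) + 2ω²‖θ₀‖²`. The `η`-part
`b♯(θ₀, η − Π_K η)` is at most `(|||θ₀|||♯² + |||η − Π_K η|||♯²)/2`, and the other part equals
`b♯(e, P e) + ω² (Π_K e, Π_K P e)`, because `Π_K` maps into the kernel of `C` and of `s`.
Weak consistency bounds `b♯(e, P e)`. Galerkin orthogonality (for `e`) and the definition of `P`
(for `η`) make `P e` orthogonal to `K_h`, so `Π_{K_h} P e = 0` and divergence conformity bounds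
`ω‖Π_K P e‖`. Absorbing `|||θ₀|||♯²/2` into the left-hand side gives the estimate.
-/

namespace MaxwellDG

variable {L M : Type*} [NormedAddCommGroup L] [InnerProductSpace ℝ L]
  [NormedAddCommGroup M] [InnerProductSpace ℝ M]

section OrthogonalProjection

variable {K : Set L} {Q : L → L}

theorem inner_proj_right (hmem : ∀ v, Q v ∈ K) (horth : ∀ v, ∀ w ∈ K, ⟪v - Q v, w⟫ = 0)
    (v w : L) : ⟪v, Q w⟫ = ⟪Q v, Q w⟫ := by
  have h := horth v (Q w) (hmem w)
  rwa [inner_sub_left, sub_eq_zero] at h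

theorem proj_eq_zero_of_forall_inner_eq_zero (hmem : ∀ v, Q v ∈ K)
    (horth : ∀ v, ∀ w ∈ K, ⟪v - Q v, w⟫ = 0) {v : L} (hv : ∀ w ∈ K, ⟪v, w⟫ = 0) : Q v = 0 := by
  rw [← inner_self_eq_zero (𝕜 := ℝ), ← inner_proj_right hmem horth]
  exact hv _ (hmem v)

theorem sq_mul_inner_proj_right_le (hmem : ∀ v, Q v ∈ K)
    (horth : ∀ v, ∀ w ∈ K, ⟪v - Q v, w⟫ = 0) (ω : ℝ) (v w : L) :
    ω ^ 2 * ⟪v, Q w⟫ ≤ (ω * ‖Q v‖) * (ω * ‖Q w‖) := by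
  rw [inner_proj_right hmem horth]
  nlinarith [real_inner_le_norm (Q v) (Q w), sq_nonneg ω]

end OrthogonalProjection

section Forms

variable (ω : ℝ) (C : L →ₗ[ℝ] M) (s : L →ₗ[ℝ] L →ₗ[ℝ] ℝ)

def bSharp (v w : L) : ℝ := -ω ^ 2 * ⟪v, w⟫ + ⟪C v, C w⟫ + s v w

def bSharpPlus (v w : L) : ℝ := ω ^ 2 * ⟪v, w⟫ + ⟪C v, C w⟫ + s v w

def tnormSharpSq (v : L) : ℝ := ω ^ 2 * ‖v‖ ^ 2 + ‖C v‖ ^ 2 + s v v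

variable {ω C s}

theorem bSharp_add_right (v w₁ w₂ : L) :
    bSharp ω C s v (w₁ + w₂) = bSharp ω C s v w₁ + bSharp ω C s v w₂ := by
  simp only [bSharp, inner_add_right, map_add]
  ring

theorem tnormSharpSq_eq_bSharp_add (v : L) :
    tnormSharpSq ω C s v = bSharp ω C s v v + 2 * ω ^ 2 * ‖v‖ ^ 2 := by
  simp only [tnormSharpSq, bSharp, real_inner_self_eq_norm_sq]
  ring

theorem bSharp_le_half_add (hs_symm : ∀ v w, s v w = s w v) (hs_pos : ∀ v, 0 ≤ s v v)
    (v w : L) :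
    bSharp ω C s v w ≤ (tnormSharpSq ω C s v + tnormSharpSq ω C s w) / 2 := by
  have h_add : 0 ≤ ω ^ 2 * ‖v + w‖ ^ 2 := by positivity
  have h_sub : 0 ≤ ‖C (v - w)‖ ^ 2 + s (v - w) (v - w) := add_nonneg (sq_nonneg _) (hs_pos _)
  rw [norm_add_sq_real] at h_add
  rw [map_sub, norm_sub_sq_real] at h_sub
  simp only [map_sub, LinearMap.sub_apply, hs_symm w v] at h_sub
  simp only [bSharp, tnormSharpSq]
  linarith

theorem eq_zero_of_bSharpPlus_self_eq_zero (hω : ω ≠ 0) (hs_pos : ∀ v, 0 ≤ s v v) {v : L}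
    (h : bSharpPlus ω C s v v = 0) : v = 0 := by
  rw [bSharpPlus, real_inner_self_eq_norm_sq, real_inner_self_eq_norm_sq] at h
  have hv : ω ^ 2 * ‖v‖ ^ 2 = 0 := by nlinarith [hs_pos v, sq_nonneg ‖C v‖, sq_nonneg ω]
  simpa [hω] using hv

theorem inner_eq_zero_of_bSharp_eq_zero (hω : ω ≠ 0) {v w : L} (hCw : C w = 0) (hs : s v w = 0)
    (h : bSharp ω C s v w = 0) : ⟪v, w⟫ = 0 := by
  simpa [bSharp, hCw, hs, hω] using h

theorem inner_eq_zero_of_bSharpPlus_eq_zero (hω : ω ≠ 0) {v w : L} (hCw : C w = 0)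
    (hs : s v w = 0) (h : bSharpPlus ω C s v w = 0) : ⟪v, w⟫ = 0 := by
  simpa [bSharpPlus, hCw, hs, hω] using h

theorem apply_eq_self_of_bSharpPlus_orth (hω : ω ≠ 0) (hs_pos : ∀ v, 0 ≤ s v v)
    {Vh : Submodule ℝ L} {P : L → L} (hP_mem : ∀ v, P v ∈ Vh)
    (hP_orth : ∀ v, ∀ wh ∈ Vh, bSharpPlus ω C s (v - P v) wh = 0) {v : L} (hv : v ∈ Vh) :
    P v = v := by
  have h := hP_orth v (v - P v) (Vh.sub_mem hv (hP_mem v))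
  exact (sub_eq_zero.mp (eq_zero_of_bSharpPlus_self_eq_zero hω hs_pos h)).symm

section KernelProjection

variable {K : Set L} {Q : L →ₗ[ℝ] L}

theorem bSharp_sub_proj_sub_proj (hmem : ∀ v, Q v ∈ K) (horth : ∀ v, ∀ w ∈ K, ⟪v - Q v, w⟫ = 0)
    (hKC : ∀ w ∈ K, C w = 0) (hKs : ∀ v, ∀ w ∈ K, s v w = 0) (hs_symm : ∀ v w, s v w = s w v)
    (v w : L) :
    bSharp ω C s (v - Q v) (w - Q w) = bSharp ω C s v w + ω ^ 2 * ⟪v, Q w⟫ := by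
  have h_inner : ⟪v - Q v, w - Q w⟫ = ⟪v, w⟫ - ⟪v, Q w⟫ := by
    rw [inner_sub_right, horth v _ (hmem w), sub_zero, inner_sub_left,
      inner_proj_right hmem horth v w, real_inner_comm w (Q v), inner_proj_right hmem horth w v,
      real_inner_comm (Q v)]
  have h_s : s (v - Q v) (w - Q w) = s v w := by
    simp only [map_sub, LinearMap.sub_apply, hKs _ _ (hmem _), hs_symm (Q v) w]
    ring
  rw [bSharp, bSharp, h_inner, h_s, map_sub, map_sub, hKC _ (hmem v), hKC _ (hmem w), sub_zero,
    sub_zero]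
  ring

theorem tnormSharpSq_sub_proj_le (hmem : ∀ v, Q v ∈ K)
    (horth : ∀ v, ∀ w ∈ K, ⟪v - Q v, w⟫ = 0) (hKC : ∀ w ∈ K, C w = 0)
    (hKs : ∀ v, ∀ w ∈ K, s v w = 0) (hs_symm : ∀ v w, s v w = s w v) (hs_pos : ∀ v, 0 ≤ s v v)
    {e η d : L} (hsplit : e = η + d) :
    tnormSharpSq ω C s (e - Q e) ≤
      tnormSharpSq ω C s (η - Q η) + 2 * (ω ^ 2 * ⟪e, Q d⟫) + 2 * bSharp ω C s e d +
        4 * ω ^ 2 * ‖e - Q e‖ ^ 2 := by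
  have hθ : e - Q e = (η - Q η) + (d - Q d) := by rw [hsplit, map_add]; abel
  have h_η := bSharp_le_half_add (ω := ω) (C := C) hs_symm hs_pos (e - Q e) (η - Q η)
  have h_d := bSharp_sub_proj_sub_proj (ω := ω) hmem horth hKC hKs hs_symm e d
  have h_split : bSharp ω C s (e - Q e) (e - Q e) =
      bSharp ω C s (e - Q e) (η - Q η) + bSharp ω C s (e - Q e) (d - Q d) := by
    rw [← bSharp_add_right, ← hθ]
  linarith [tnormSharpSq_eq_bSharp_add (ω := ω) (C := C) (s := s) (e - Q e)]

end KernelProjection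

end Forms

end MaxwellDG

open MaxwellDG

theorem bound_on_tnormS_theta_zero_general
    {L M : Type*} [NormedAddCommGroup L] [InnerProductSpace ℝ L]
    [NormedAddCommGroup M] [InnerProductSpace ℝ M]
    (ω : ℝ) (hω : 0 < ω)
    (V Vh : Submodule ℝ L)
    (C : L →ₗ[ℝ] M)
    (s : L →ₗ[ℝ] L →ₗ[ℝ] ℝ)
    (hs_symm : ∀ v w : L, s v w = s w v)
    (hs_pos : ∀ v : L, 0 ≤ s v v)
    (hs_conf : ∀ v w : L, v ∈ V ∨ w ∈ V → s v w = 0)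
    (nc : L → ℝ)
    (projK : L →ₗ[ℝ] L)
    (hprojK_mem : ∀ v : L, projK v ∈ V ∧ C (projK v) = 0)
    (hprojK_orth : ∀ v : L, ∀ w ∈ V, C w = 0 → ⟪v - projK v, w⟫ = 0)
    (projKh : L →ₗ[ℝ] L)
    (hprojKh_mem : ∀ v : L, projKh v ∈ Vh ⊓ V ∧ C (projKh v) = 0)
    (hprojKh_orth : ∀ v : L, ∀ w ∈ Vh ⊓ V, C w = 0 → ⟪v - projKh v, w⟫ = 0)
    (γdiv : ℝ)
    (hdiv : ∀ vh ∈ Vh, projKh vh = 0 →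
      ω * ‖projK vh‖ ≤ γdiv * Real.sqrt (‖C vh‖ ^ 2 + nc vh ^ 2))
    (P : L →ₗ[ℝ] L)
    (hP_mem : ∀ v : L, P v ∈ Vh)
    (hP_orth : ∀ v : L, ∀ wh ∈ Vh,
      ω ^ 2 * ⟪v - P v, wh⟫ + ⟪C (v - P v), C wh⟫ + s (v - P v) wh = 0)
    (E : L) (Eh : L) (hEh : Eh ∈ Vh)
    (hGO : ∀ v ∈ Vh ⊓ V,
      -ω ^ 2 * ⟪E - Eh, v⟫ + ⟪C (E - Eh), C v⟫ + s (E - Eh) v = 0)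
    (D : ℝ)
    (hweak : ∀ wh ∈ Vh,
      |(-ω ^ 2 * ⟪E - Eh, wh⟫ + ⟪C (E - Eh), C wh⟫ + s (E - Eh) wh)| ≤ D * nc wh) :
    ω ^ 2 * ‖(E - Eh) - projK (E - Eh)‖ ^ 2 + ‖C ((E - Eh) - projK (E - Eh))‖ ^ 2 +
        s ((E - Eh) - projK (E - Eh)) ((E - Eh) - projK (E - Eh)) ≤
      (ω ^ 2 * ‖(E - P E) - projK (E - P E)‖ ^ 2 +
          ‖C ((E - P E) - projK (E - P E))‖ ^ 2 +
          s ((E - P E) - projK (E - P E)) ((E - P E) - projK (E - P E))) +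
        2 * (ω * ‖projK (E - Eh)‖) *
          (γdiv * Real.sqrt (‖C (P (E - Eh))‖ ^ 2 + nc (P (E - Eh)) ^ 2)) +
        2 * nc (P (E - Eh)) * D +
        4 * ω ^ 2 * ‖(E - Eh) - projK (E - Eh)‖ ^ 2 := by
  have hω0 : ω ≠ 0 := hω.ne'
  let K : Set L := {w | w ∈ V ∧ C w = 0}
  have hK_orth : ∀ v, ∀ w ∈ K, ⟪v - projK v, w⟫ = 0 := fun v w hw => hprojK_orth v w hw.1 hw.2
  have hPEh : P Eh = Eh := apply_eq_self_of_bSharpPlus_orth hω0 hs_pos hP_mem hP_orth hEh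
  have hsplit : E - Eh = (E - P E) + P (E - Eh) := by rw [map_sub, hPEh]; abel
  let Kh : Set L := {w | w ∈ Vh ⊓ V ∧ C w = 0}
  have hKh_orth : ∀ v, ∀ w ∈ Kh, ⟪v - projKh v, w⟫ = 0 :=
    fun v w hw => hprojKh_orth v w hw.1 hw.2
  have hPe_orth : ∀ w ∈ Kh, ⟪P (E - Eh), w⟫ = 0 := by
    rintro w ⟨hw, hCw⟩
    have h_e := inner_eq_zero_of_bSharp_eq_zero hω0 hCw (hs_conf _ _ (Or.inr hw.2)) (hGO w hw)
    have h_η := inner_eq_zero_of_bSharpPlus_eq_zero hω0 hCw (hs_conf _ _ (Or.inr hw.2))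
      (hP_orth E w hw.1)
    rw [eq_sub_of_add_eq' hsplit.symm, inner_sub_left, h_e, h_η, sub_zero]
  have hKh : projKh (P (E - Eh)) = 0 :=
    proj_eq_zero_of_forall_inner_eq_zero hprojKh_mem hKh_orth hPe_orth
  have h_weak : bSharp ω C s (E - Eh) (P (E - Eh)) ≤ D * nc (P (E - Eh)) :=
    (le_abs_self _).trans (hweak _ (hP_mem _))
  have h_div := (sq_mul_inner_proj_right_le hprojK_mem hK_orth ω (E - Eh) (P (E - Eh))).trans
    (mul_le_mul_of_nonneg_left (hdiv _ (hP_mem _) hKh) (by positivity))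
  have key := tnormSharpSq_sub_proj_le (ω := ω) hprojK_mem hK_orth (fun _ hw => hw.2)
    (fun v w hw => hs_conf v w (Or.inr hw.1)) hs_symm hs_pos hsplit
  simp only [tnormSharpSq] at key
  linarith

/-- **Bound on the augmented energy norm of the `K`-orthogonal error component.**
Under Galerkin orthogonality on conforming test functions and the weak-consistency bound
`|b♯(e, w_h)| ≤ D |w_h|_nc` on `V_h`, with `e := E − E_h`, `η := E − P E`,
`θ₀ := e − Π_K e`, one has
`|||θ₀|||♯² ≤ |||η − Π_K η|||♯² + 2 ω‖Π_K e‖ γ_div (‖C(P e)‖² + |P e|_nc²)^{1/2}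
  + 2 |P e|_nc D + 4 ω² ‖θ₀‖²`. -/
theorem bound_on_tnormS_theta_zero
    {L M : Type*} [NormedAddCommGroup L] [InnerProductSpace ℝ L]
    [NormedAddCommGroup M] [InnerProductSpace ℝ M]
    (ω : ℝ) (hω : 0 < ω)
    (Vs V Vh : Submodule ℝ L) (hVVs : V ≤ Vs) (hVhVs : Vh ≤ Vs)
    (C : L →ₗ[ℝ] M)
    (s : L →ₗ[ℝ] L →ₗ[ℝ] ℝ)
    (hs_symm : ∀ v w : L, s v w = s w v)
    (hs_pos : ∀ v : L, 0 ≤ s v v)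
    (hs_conf : ∀ v w : L, v ∈ V ∨ w ∈ V → s v w = 0)
    (nc : L → ℝ)
    (hnc_nonneg : ∀ v : L, 0 ≤ nc v)
    (hnc_add : ∀ v w : L, nc (v + w) ≤ nc v + nc w)
    (hnc_smul : ∀ (c : ℝ) (v : L), nc (c • v) = |c| * nc v)
    (hnc_conf : ∀ v ∈ V, nc v = 0)
    (projK : L →ₗ[ℝ] L)
    (hprojK_mem : ∀ v : L, projK v ∈ V ∧ C (projK v) = 0)
    (hprojK_orth : ∀ v : L, ∀ w ∈ V, C w = 0 → ⟪v - projK v, w⟫ = 0)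
    (projKh : L →ₗ[ℝ] L)
    (hprojKh_mem : ∀ v : L, projKh v ∈ Vh ⊓ V ∧ C (projKh v) = 0)
    (hprojKh_orth : ∀ v : L, ∀ w ∈ Vh ⊓ V, C w = 0 → ⟪v - projKh v, w⟫ = 0)
    (γdiv : ℝ) (hγdiv : 0 ≤ γdiv)
    (hdiv : ∀ vh ∈ Vh, projKh vh = 0 →
      ω * ‖projK vh‖ ≤ γdiv * Real.sqrt (‖C vh‖ ^ 2 + nc vh ^ 2))
    (P : L →ₗ[ℝ] L)
    (hP_mem : ∀ v : L, P v ∈ Vh)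
    (hP_orth : ∀ v : L, ∀ wh ∈ Vh,
      ω ^ 2 * ⟪v - P v, wh⟫ + ⟪C (v - P v), C wh⟫ + s (v - P v) wh = 0)
    (E : L) (hE : E ∈ V) (Eh : L) (hEh : Eh ∈ Vh)
    (hGO : ∀ v ∈ Vh ⊓ V,
      -ω ^ 2 * ⟪E - Eh, v⟫ + ⟪C (E - Eh), C v⟫ + s (E - Eh) v = 0)
    (D : ℝ) (hD : 0 ≤ D)
    (hweak : ∀ wh ∈ Vh,
      |(-ω ^ 2 * ⟪E - Eh, wh⟫ + ⟪C (E - Eh), C wh⟫ + s (E - Eh) wh)| ≤ D * nc wh) :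
    ω ^ 2 * ‖(E - Eh) - projK (E - Eh)‖ ^ 2 + ‖C ((E - Eh) - projK (E - Eh))‖ ^ 2 +
        s ((E - Eh) - projK (E - Eh)) ((E - Eh) - projK (E - Eh)) ≤
      (ω ^ 2 * ‖(E - P E) - projK (E - P E)‖ ^ 2 +
          ‖C ((E - P E) - projK (E - P E))‖ ^ 2 +
          s ((E - P E) - projK (E - P E)) ((E - P E) - projK (E - P E))) +
        2 * (ω * ‖projK (E - Eh)‖) *
          (γdiv * Real.sqrt (‖C (P (E - Eh))‖ ^ 2 + nc (P (E - Eh)) ^ 2)) +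
        2 * nc (P (E - Eh)) * D +
        4 * ω ^ 2 * ‖(E - Eh) - projK (E - Eh)‖ ^ 2 :=
  bound_on_tnormS_theta_zero_general ω hω V Vh C s hs_symm hs_pos hs_conf nc projK hprojK_mem
    hprojK_orth projKh hprojKh_mem hprojKh_orth γdiv hdiv P hP_mem hP_orth E Eh hEh hGO D hweak
end

section
/- Let E ∈ V and E_h ∈ V_h, and set e := E − E_h. Assume: Galerkin orthogonality b♯(e, v) = 0 for all v ∈ V_h^c; the residual bound |b♯(e, v)| ≤ R |||v||| for all v ∈ V, for a constant R ≥ 0; and the nonconformity bound |E_h|_nc ≤ N, for a constant N ≥ 0. Then ω ‖e‖_L ≤ ((γ_p R + γ_d N)² + R²)^{1/2}; in particular ω ‖e‖_L ≤ (1 + γ_p) R + γ_d N. -/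
/-!
Split `e = θ + p` orthogonally, with `p := Π_K e` curl-free. Testing the residual with `p` gives
`ω ‖p‖ ≤ R`, since `b♯(e, p) = -ω² ‖p‖²`. For `θ` one uses duality: the adjoint solution `ζ` for
the datum `θ` gives `‖θ‖² = b♯(e, ζ) + (b♯(E_h, ζ) - (E_h, θ))`. Galerkin orthogonality lets one
replace `ζ` by `ζ - v` for any conforming discrete `v` in the first term, which is then controlled
by `R γ_p ‖θ‖ / ω`, while the second term is a nonconformity error bounded by `γ_d N ‖θ‖ / ω`.
Pythagoras combines the two bounds.
-/

open scoped RealInnerProductSpace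

lemma le_of_sq_le_mul {x c : ℝ} (hc : 0 ≤ c) (h : x ^ 2 ≤ c * x) : x ≤ c := by
  nlinarith

lemma Real.sqrt_sq_add_sq_le_add {a b : ℝ} (ha : 0 ≤ a) (hb : 0 ≤ b) :
    √(a ^ 2 + b ^ 2) ≤ a + b :=
  Real.sqrt_le_iff.mpr ⟨by positivity, by nlinarith [mul_nonneg ha hb]⟩

section

variable {L M : Type*} [NormedAddCommGroup L] [InnerProductSpace ℝ L]
  [NormedAddCommGroup M] [InnerProductSpace ℝ M]

lemma real_inner_add_left_eq_norm_sq {u w : L} (h : ⟪u, w⟫ = 0) : ⟪u + w, w⟫ = ‖w‖ ^ 2 := by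
  rw [inner_add_left, h, zero_add, real_inner_self_eq_norm_sq]

lemma mul_norm_add_le_sqrt {ω a b : ℝ} (hω : 0 ≤ ω) {x y : L} (h : ⟪x, y⟫ = 0)
    (hx : ω * ‖x‖ ≤ a) (hy : ω * ‖y‖ ≤ b) : ω * ‖x + y‖ ≤ √(a ^ 2 + b ^ 2) := by
  have hpyth : (ω * ‖x + y‖) ^ 2 = (ω * ‖x‖) ^ 2 + (ω * ‖y‖) ^ 2 := by
    linear_combination ω ^ 2 * norm_add_sq_eq_norm_sq_add_norm_sq_real h
  apply Real.le_sqrt_of_sq_le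
  rw [hpyth]
  gcongr

lemma tnorm_eq_of_map_eq_zero {ω : ℝ} (hω : 0 ≤ ω) {C : L →ₗ[ℝ] M} {v : L} (hv : C v = 0) :
    tnorm ω C v = ω * ‖v‖ := by
  rw [tnorm, hv, norm_zero, sq 0, mul_zero, add_zero, ← mul_pow]
  exact Real.sqrt_sq (by positivity)

lemma mul_abs_apply_le_mul_sInf {ω R : ℝ} {C : L →ₗ[ℝ] M} {W V : Submodule ℝ L} (hWV : W ≤ V)
    (hω : 0 ≤ ω) (hR : 0 ≤ R) {ρ : L →ₗ[ℝ] ℝ} (hρW : ∀ v ∈ W, ρ v = 0)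
    (hρV : ∀ v ∈ V, |ρ v| ≤ R * tnorm ω C v) {ζ : L} (hζ : ζ ∈ V) :
    ω * |ρ ζ| ≤ R * sInf {t : ℝ | ∃ v ∈ W, t = ω * tnorm ω C (ζ - v)} := by
  rw [← smul_eq_mul R, ← Real.sInf_smul_of_nonneg hR]
  refine le_csInf (Set.Nonempty.smul_set ⟨_, 0, W.zero_mem, rfl⟩) ?_
  rintro _ ⟨_, ⟨v, hv, rfl⟩, rfl⟩
  have hρζ : ρ ζ = ρ (ζ - v) := by rw [map_sub, hρW v hv, sub_zero]
  calc ω * |ρ ζ| ≤ ω * (R * tnorm ω C (ζ - v)) := by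
        rw [hρζ]
        exact mul_le_mul_of_nonneg_left (hρV _ (sub_mem hζ (hWV hv))) hω
    _ = R • (ω * tnorm ω C (ζ - v)) := by rw [smul_eq_mul]; ring

variable (ω : ℝ) (C : L →ₗ[ℝ] M) (s : L →ₗ[ℝ] L →ₗ[ℝ] ℝ)

noncomputable def bSharp : L →ₗ[ℝ] L →ₗ[ℝ] ℝ :=
  -ω ^ 2 • innerₗ L + (innerₗ M).compl₁₂ C C + s

variable {ω C s}

@[simp]
lemma bSharp_apply (v w : L) : bSharp ω C s v w = -ω ^ 2 * ⟪v, w⟫ + ⟪C v, C w⟫ + s v w := rfl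

lemma mul_norm_le_of_map_eq_zero {e p : L} {R : ℝ} (hω : 0 ≤ ω) (hR : 0 ≤ R)
    (hCp : C p = 0) (hsp : s e p = 0) (horth : ⟪e - p, p⟫ = 0)
    (hres : |bSharp ω C s e p| ≤ R * tnorm ω C p) : ω * ‖p‖ ≤ R := by
  have hep : ⟪e, p⟫ = ‖p‖ ^ 2 := by
    simpa only [sub_add_cancel] using real_inner_add_left_eq_norm_sq horth
  rw [bSharp_apply, hCp, hsp, inner_zero_right, add_zero, add_zero, hep,
    tnorm_eq_of_map_eq_zero hω hCp, abs_le] at hres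
  apply le_of_sq_le_mul hR
  rw [mul_pow]
  linarith [hres.1]

lemma mul_norm_le_of_duality {E Eh θ ζ : L} {a b : ℝ} (hω : 0 ≤ ω) (hab : 0 ≤ a + b)
    (hθ : ⟪E - Eh, θ⟫ = ‖θ‖ ^ 2) (hEζ : bSharp ω C s E ζ = ⟪E, θ⟫)
    (hprimal : ω * |bSharp ω C s (E - Eh) ζ| ≤ a * ‖θ‖)
    (hdual : ω * |⟪Eh, θ⟫ - bSharp ω C s Eh ζ| ≤ b * ‖θ‖) : ω * ‖θ‖ ≤ a + b := by
  have hsplit : ‖θ‖ ^ 2 = bSharp ω C s (E - Eh) ζ - (⟪Eh, θ⟫ - bSharp ω C s Eh ζ) := by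
    rw [← hθ, inner_sub_left, map_sub, LinearMap.sub_apply, hEζ]
    ring
  have hsq : ω * ‖θ‖ ^ 2 ≤ (a + b) * ‖θ‖ := calc
    _ ≤ ω * (|bSharp ω C s (E - Eh) ζ| + |⟪Eh, θ⟫ - bSharp ω C s Eh ζ|) := by
      rw [hsplit]
      gcongr
      exact (le_abs_self _).trans (abs_sub _ _)
    _ ≤ a * ‖θ‖ + b * ‖θ‖ := by
      rw [mul_add]
      exact add_le_add hprimal hdual
    _ = (a + b) * ‖θ‖ := by ring
  apply le_of_sq_le_mul hab
  nlinarith [mul_le_mul_of_nonneg_left hsq hω]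

end

theorem L2_norm_reliability_general
    {L M : Type*} [NormedAddCommGroup L] [InnerProductSpace ℝ L]
    [NormedAddCommGroup M] [InnerProductSpace ℝ M]
    (ω : ℝ) (hω : 0 < ω)
    (V Vh : Submodule ℝ L)
    (C : L →ₗ[ℝ] M)
    (s : L →ₗ[ℝ] L →ₗ[ℝ] ℝ)
    (hs_conf : ∀ v w : L, v ∈ V ∨ w ∈ V → s v w = 0)
    (nc : L → ℝ)
    (projK : L →ₗ[ℝ] L)
    (hprojK_mem : ∀ v : L, projK v ∈ V ∧ C (projK v) = 0)
    (hprojK_orth : ∀ v : L, ∀ w ∈ V, C w = 0 → ⟪v - projK v, w⟫ = 0)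
    (γp γd : ℝ) (hγp : 0 ≤ γp) (hγd : 0 ≤ γd)
    (hadj : ∀ θ : L, (∀ w ∈ V, C w = 0 → ⟪θ, w⟫ = 0) →
      ∃ ζ ∈ V, (∀ w ∈ V, -ω ^ 2 * ⟪w, ζ⟫ + ⟪C w, C ζ⟫ = ⟪w, θ⟫) ∧
        sInf {t : ℝ | ∃ v ∈ Vh ⊓ V, t = ω * tnorm ω C (ζ - v)} ≤ γp * ‖θ‖ ∧
        ∀ wh ∈ Vh,
          ω * |⟪wh, θ⟫ - (-ω ^ 2 * ⟪wh, ζ⟫ + ⟪C wh, C ζ⟫ + s wh ζ)| ≤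
            γd * ‖θ‖ * nc wh)
    (E : L) (hE : E ∈ V) (Eh : L) (hEh : Eh ∈ Vh)
    (hGO : ∀ v ∈ Vh ⊓ V,
      -ω ^ 2 * ⟪E - Eh, v⟫ + ⟪C (E - Eh), C v⟫ + s (E - Eh) v = 0)
    (R : ℝ) (hR : 0 ≤ R)
    (hres : ∀ v ∈ V,
      |(-ω ^ 2 * ⟪E - Eh, v⟫ + ⟪C (E - Eh), C v⟫ + s (E - Eh) v)| ≤
        R * tnorm ω C v)
    (N : ℝ) (hN : 0 ≤ N) (hnc_Eh : nc Eh ≤ N) :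
    ω * ‖E - Eh‖ ≤ Real.sqrt ((γp * R + γd * N) ^ 2 + R ^ 2) ∧
    ω * ‖E - Eh‖ ≤ (1 + γp) * R + γd * N := by
  set e := E - Eh
  set θ := e - projK e
  obtain ⟨hpV, hpC⟩ := hprojK_mem e
  have horth : ⟪θ, projK e⟫ = 0 := hprojK_orth e _ hpV hpC
  obtain ⟨ζ, hζV, hζeq, hinf, hdual⟩ := hadj θ (hprojK_orth e)
  have hp : ω * ‖projK e‖ ≤ R :=
    mul_norm_le_of_map_eq_zero hω.le hR hpC (hs_conf _ _ (.inr hpV)) horth (hres _ hpV)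
  have hprimal : ω * |bSharp ω C s e ζ| ≤ γp * R * ‖θ‖ := calc
    _ ≤ R * sInf {t : ℝ | ∃ v ∈ Vh ⊓ V, t = ω * tnorm ω C (ζ - v)} :=
      mul_abs_apply_le_mul_sInf inf_le_right hω.le hR hGO hres hζV
    _ ≤ R * (γp * ‖θ‖) := by gcongr
    _ = γp * R * ‖θ‖ := by ring
  have hnc : ω * |⟪Eh, θ⟫ - bSharp ω C s Eh ζ| ≤ γd * N * ‖θ‖ := calc
    _ ≤ γd * ‖θ‖ * nc Eh := hdual Eh hEh
    _ ≤ γd * ‖θ‖ * N := by gcongr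
    _ = γd * N * ‖θ‖ := by ring
  have hθ : ω * ‖θ‖ ≤ γp * R + γd * N := by
    refine mul_norm_le_of_duality hω.le (by positivity) ?_ ?_ hprimal hnc
    · have h := real_inner_add_left_eq_norm_sq (real_inner_comm θ _ ▸ horth)
      rwa [show projK e + θ = e from add_sub_cancel _ _] at h
    · rw [bSharp_apply, hs_conf E ζ (.inl hE), add_zero]
      exact hζeq E hE
  have hfirst := sub_add_cancel e (projK e) ▸ mul_norm_add_le_sqrt hω.le horth hθ hp
  exact ⟨hfirst, hfirst.trans ((Real.sqrt_sq_add_sq_le_add (by positivity) hR).trans_eq (by ring))⟩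

/-- **`L²`-norm reliability estimate.**
Under Galerkin orthogonality on conforming test functions, the residual bound
`|b♯(e, v)| ≤ R |||v|||` on `V`, and the nonconformity bound `|E_h|_nc ≤ N`, one has
`ω ‖e‖_L ≤ ((γ_p R + γ_d N)² + R²)^{1/2}`, and in particular
`ω ‖e‖_L ≤ (1 + γ_p) R + γ_d N`, where `e := E − E_h`. -/
theorem L2_norm_reliability
    {L M : Type*} [NormedAddCommGroup L] [InnerProductSpace ℝ L]
    [NormedAddCommGroup M] [InnerProductSpace ℝ M]
    (ω : ℝ) (hω : 0 < ω)
    (Vs V Vh : Submodule ℝ L) (hVVs : V ≤ Vs) (hVhVs : Vh ≤ Vs)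
    (C : L →ₗ[ℝ] M)
    (s : L →ₗ[ℝ] L →ₗ[ℝ] ℝ)
    (hs_symm : ∀ v w : L, s v w = s w v)
    (hs_pos : ∀ v : L, 0 ≤ s v v)
    (hs_conf : ∀ v w : L, v ∈ V ∨ w ∈ V → s v w = 0)
    (nc : L → ℝ)
    (hnc_nonneg : ∀ v : L, 0 ≤ nc v)
    (hnc_add : ∀ v w : L, nc (v + w) ≤ nc v + nc w)
    (hnc_smul : ∀ (c : ℝ) (v : L), nc (c • v) = |c| * nc v)
    (hnc_conf : ∀ v ∈ V, nc v = 0)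
    (projK : L →ₗ[ℝ] L)
    (hprojK_mem : ∀ v : L, projK v ∈ V ∧ C (projK v) = 0)
    (hprojK_orth : ∀ v : L, ∀ w ∈ V, C w = 0 → ⟪v - projK v, w⟫ = 0)
    (γp γd : ℝ) (hγp : 0 ≤ γp) (hγd : 0 ≤ γd)
    (hadj : ∀ θ : L, (∀ w ∈ V, C w = 0 → ⟪θ, w⟫ = 0) →
      ∃ ζ ∈ V, (∀ w ∈ V, -ω ^ 2 * ⟪w, ζ⟫ + ⟪C w, C ζ⟫ = ⟪w, θ⟫) ∧
        sInf {t : ℝ | ∃ v ∈ Vh ⊓ V, t = ω * tnorm ω C (ζ - v)} ≤ γp * ‖θ‖ ∧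
        ∀ wh ∈ Vh,
          ω * |⟪wh, θ⟫ - (-ω ^ 2 * ⟪wh, ζ⟫ + ⟪C wh, C ζ⟫ + s wh ζ)| ≤
            γd * ‖θ‖ * nc wh)
    (E : L) (hE : E ∈ V) (Eh : L) (hEh : Eh ∈ Vh)
    (hGO : ∀ v ∈ Vh ⊓ V,
      -ω ^ 2 * ⟪E - Eh, v⟫ + ⟪C (E - Eh), C v⟫ + s (E - Eh) v = 0)
    (R : ℝ) (hR : 0 ≤ R)
    (hres : ∀ v ∈ V,
      |(-ω ^ 2 * ⟪E - Eh, v⟫ + ⟪C (E - Eh), C v⟫ + s (E - Eh) v)| ≤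
        R * tnorm ω C v)
    (N : ℝ) (hN : 0 ≤ N) (hnc_Eh : nc Eh ≤ N) :
    ω * ‖E - Eh‖ ≤ Real.sqrt ((γp * R + γd * N) ^ 2 + R ^ 2) ∧
    ω * ‖E - Eh‖ ≤ (1 + γp) * R + γd * N :=
  L2_norm_reliability_general ω hω V Vh C s hs_conf nc projK hprojK_mem hprojK_orth γp γd hγp hγd
    hadj E hE Eh hEh hGO R hR hres N hN hnc_Eh
end

section
/- Let E ∈ V and E_h ∈ V_h, and set e := E − E_h. Assume: the residual bound |b♯(e, v)| ≤ R |||v||| for all v ∈ V, for a constant R ≥ 0; the L²-error bound ω ‖e‖_L ≤ S, for a constant S ≥ 0; and that there exists E_h^av ∈ V with |||E_h − E_h^av||| ≤ A, for a constant A ≥ 0. Then the reliability bound |||e|||² ≤ (R + 2S)² + A² holds. -/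
/-!
Split the error `e = E - E_h` as `e = (e - P^V e) + P^V e`; the two parts are `b⁺`-orthogonal, so
`|||e|||² = |||e - P^V e|||² + |||P^V e|||²`. The conforming part satisfies
`|||P^V e|||² = b⁺(e, P^V e) = b♯(e, P^V e) + 2ω² (e, P^V e)_L`, since `s` vanishes on `V`; the residual and
the `L²` bounds give `|||P^V e||| ≤ R + 2S`. The nonconforming part `e - P^V e` is the `b⁺`-best approximation
error of `e` from `V`, hence is bounded by `|||E_h - E_h^av||| ≤ A` because `E - E_h^av ∈ V`.
-/

open scoped RealInnerProductSpace

lemma sq_le_sq_of_sq_le_mul {t c : ℝ} (h : t ^ 2 ≤ c * t) : t ^ 2 ≤ c ^ 2 := by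
  nlinarith [sq_nonneg (c - t)]

section EnergyForm

variable {L M : Type*} [NormedAddCommGroup L] [InnerProductSpace ℝ L]
  [NormedAddCommGroup M] [InnerProductSpace ℝ M] (ω : ℝ) (C : L →ₗ[ℝ] M)

/-- The paper's `b⁺`, whose diagonal is the square of `tnorm`. -/
noncomputable def energyForm : L →ₗ[ℝ] L →ₗ[ℝ] ℝ :=
  ω ^ 2 • innerₗ L + (innerₗ M).compl₁₂ C C

lemma energyForm_apply (v w : L) :
    energyForm ω C v w = ω ^ 2 * ⟪v, w⟫ + ⟪C v, C w⟫ := by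
  simp [energyForm]

lemma energyForm_comm (v w : L) : energyForm ω C v w = energyForm ω C w v := by
  simp only [energyForm_apply, real_inner_comm]

lemma tnorm_sq_eq_energyForm (v : L) : tnorm ω C v ^ 2 = energyForm ω C v v := by
  rw [tnorm_sq, energyForm_apply, real_inner_self_eq_norm_sq, real_inner_self_eq_norm_sq]

lemma tnorm_sub_comm (v w : L) : tnorm ω C (v - w) = tnorm ω C (w - v) := by
  rw [tnorm, tnorm, norm_sub_rev, map_sub, map_sub, norm_sub_rev (C v)]

lemma tnorm_add_sq_of_energyForm_eq_zero {u w : L} (h : energyForm ω C u w = 0) :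
    tnorm ω C (u + w) ^ 2 = tnorm ω C u ^ 2 + tnorm ω C w ^ 2 := by
  simp only [tnorm_sq_eq_energyForm, map_add, LinearMap.add_apply, h,
    energyForm_comm ω C w u]
  ring

variable {ω C}

lemma tnorm_le_tnorm_add_of_energyForm_eq_zero {V : Submodule ℝ L} {q : L}
    (hq : ∀ w ∈ V, energyForm ω C q w = 0) {w : L} (hw : w ∈ V) :
    tnorm ω C q ≤ tnorm ω C (q + w) := by
  rw [← pow_le_pow_iff_left₀ (tnorm_nonneg ω C q) (tnorm_nonneg ω C _) two_ne_zero,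
    tnorm_add_sq_of_energyForm_eq_zero ω C (hq w hw)]
  exact le_add_of_nonneg_right (sq_nonneg _)

lemma tnorm_sq_le_of_residual_bound (hω : 0 ≤ ω) {e p : L} {R S : ℝ}
    (horth : energyForm ω C (e - p) p = 0)
    (hres : -ω ^ 2 * ⟪e, p⟫ + ⟪C e, C p⟫ ≤ R * tnorm ω C p)
    (hL2 : ω * ‖e‖ ≤ S) :
    tnorm ω C p ^ 2 ≤ (R + 2 * S) ^ 2 := by
  have hS : 0 ≤ S := (mul_nonneg hω (norm_nonneg e)).trans hL2
  have hcross : ω ^ 2 * ⟪e, p⟫ ≤ S * tnorm ω C p := calc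
    ω ^ 2 * ⟪e, p⟫ ≤ ω ^ 2 * (‖e‖ * ‖p‖) := by gcongr; exact real_inner_le_norm e p
    _ = (ω * ‖e‖) * (ω * ‖p‖) := by ring
    _ ≤ S * tnorm ω C p :=
      mul_le_mul hL2 (mul_norm_le_tnorm ω C p) (by positivity) hS
  -- `b⁺(p, p) = b⁺(e, p) = b(e, p) + 2ω² (e, p)_L`
  have hsq : tnorm ω C p ^ 2 = (-ω ^ 2 * ⟪e, p⟫ + ⟪C e, C p⟫) + 2 * (ω ^ 2 * ⟪e, p⟫) := by
    rw [map_sub, LinearMap.sub_apply, sub_eq_zero] at horth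
    rw [tnorm_sq_eq_energyForm, ← horth, energyForm_apply]
    ring
  exact sq_le_sq_of_sq_le_mul (by linarith)

end EnergyForm

theorem energy_norm_reliability_general
    {L M : Type*} [NormedAddCommGroup L] [InnerProductSpace ℝ L]
    [NormedAddCommGroup M] [InnerProductSpace ℝ M]
    (ω : ℝ) (hω : 0 < ω)
    (V : Submodule ℝ L)
    (C : L →ₗ[ℝ] M)
    (s : L →ₗ[ℝ] L →ₗ[ℝ] ℝ)
    (hs_conf : ∀ v w : L, v ∈ V ∨ w ∈ V → s v w = 0)
    (PV : L →ₗ[ℝ] L)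
    (hPV_mem : ∀ v : L, PV v ∈ V)
    (hPV_orth : ∀ v : L, ∀ w ∈ V,
      ω ^ 2 * ⟪v - PV v, w⟫ + ⟪C (v - PV v), C w⟫ = 0)
    (E : L) (hE : E ∈ V) (Eh : L)
    (R : ℝ)
    (hres : ∀ v ∈ V,
      |(-ω ^ 2 * ⟪E - Eh, v⟫ + ⟪C (E - Eh), C v⟫ + s (E - Eh) v)| ≤
        R * tnorm ω C v)
    (S : ℝ) (hL2 : ω * ‖E - Eh‖ ≤ S)
    (A : ℝ)
    (Ehav : L) (hEhav : Ehav ∈ V) (hAbound : tnorm ω C (Eh - Ehav) ≤ A) :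
    ω ^ 2 * ‖E - Eh‖ ^ 2 + ‖C (E - Eh)‖ ^ 2 ≤ (R + 2 * S) ^ 2 + A ^ 2 := by
  set e := E - Eh
  have hpV : PV e ∈ V := hPV_mem e
  have horth : ∀ w ∈ V, energyForm ω C (e - PV e) w = 0 := fun w hw =>
    (energyForm_apply ω C _ _).trans (hPV_orth e w hw)
  have hconf : tnorm ω C (PV e) ^ 2 ≤ (R + 2 * S) ^ 2 := by
    refine tnorm_sq_le_of_residual_bound hω.le (horth _ hpV) ?_ hL2
    have := (abs_le.mp (hres _ hpV)).2
    rwa [hs_conf _ _ (Or.inr hpV), add_zero] at this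
  have hnonconf : tnorm ω C (e - PV e) ≤ A := calc
    tnorm ω C (e - PV e) ≤ tnorm ω C (e - PV e + (PV e - (E - Ehav))) :=
      tnorm_le_tnorm_add_of_energyForm_eq_zero horth (V.sub_mem hpV (V.sub_mem hE hEhav))
    _ = tnorm ω C (Ehav - Eh) := by congr 1; simp only [e]; abel
    _ = tnorm ω C (Eh - Ehav) := tnorm_sub_comm ω C _ _
    _ ≤ A := hAbound
  rw [← tnorm_sq, ← sub_add_cancel e (PV e),
    tnorm_add_sq_of_energyForm_eq_zero ω C (horth _ hpV), add_comm ((R + 2 * S) ^ 2)]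
  exact add_le_add (pow_le_pow_left₀ (tnorm_nonneg ω C _) hnonconf 2) hconf

/-- **Reliability of the a posteriori error estimator in the energy norm.**
With `e := E − E_h`, if `|b♯(e, v)| ≤ R |||v|||` for all `v ∈ V`, `ω ‖e‖_L ≤ S`, and
there exists `E_h^av ∈ V` with `|||E_h − E_h^av||| ≤ A`, then
`|||e|||² ≤ (R + 2S)² + A²`. -/
theorem energy_norm_reliability
    {L M : Type*} [NormedAddCommGroup L] [InnerProductSpace ℝ L]
    [NormedAddCommGroup M] [InnerProductSpace ℝ M]
    (ω : ℝ) (hω : 0 < ω)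
    (Vs V Vh : Submodule ℝ L) (hVVs : V ≤ Vs) (hVhVs : Vh ≤ Vs)
    (C : L →ₗ[ℝ] M)
    (s : L →ₗ[ℝ] L →ₗ[ℝ] ℝ)
    (hs_symm : ∀ v w : L, s v w = s w v)
    (hs_pos : ∀ v : L, 0 ≤ s v v)
    (hs_conf : ∀ v w : L, v ∈ V ∨ w ∈ V → s v w = 0)
    (PV : L →ₗ[ℝ] L)
    (hPV_mem : ∀ v : L, PV v ∈ V)
    (hPV_orth : ∀ v : L, ∀ w ∈ V,
      ω ^ 2 * ⟪v - PV v, w⟫ + ⟪C (v - PV v), C w⟫ = 0)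
    (E : L) (hE : E ∈ V) (Eh : L) (hEh : Eh ∈ Vh)
    (R : ℝ) (hR : 0 ≤ R)
    (hres : ∀ v ∈ V,
      |(-ω ^ 2 * ⟪E - Eh, v⟫ + ⟪C (E - Eh), C v⟫ + s (E - Eh) v)| ≤
        R * tnorm ω C v)
    (S : ℝ) (hS : 0 ≤ S) (hL2 : ω * ‖E - Eh‖ ≤ S)
    (A : ℝ) (hA : 0 ≤ A)
    (Ehav : L) (hEhav : Ehav ∈ V) (hAbound : tnorm ω C (Eh - Ehav) ≤ A) :
    ω ^ 2 * ‖E - Eh‖ ^ 2 + ‖C (E - Eh)‖ ^ 2 ≤ (R + 2 * S) ^ 2 + A ^ 2 :=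
  energy_norm_reliability_general ω hω V C s hs_conf PV hPV_mem hPV_orth E hE Eh R hres S hL2 A Ehav
    hEhav hAbound
end
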